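/- Let k ≥ 1 and n ≥ 1 be natural numbers, p ≥ 1 a real number, and c ≥ 0 a real number. For each i = 1, …, k let Pᵢ(t) = Σ_{j=1}^{n} a_{ij}·tʲ be a degree-n univariate real polynomial, and let P(x₁, …, x_k) = Σ_{i=1}^{k} Pᵢ(xᵢ). If Σ_{j=1}^{n} j·|a_{ij}| ≤ c / k^{(p−1)/p} for every i = 1, …, k, then for all points (x₁,…,x_k) and (x₁′,…,x_k′) in [−1,1]ᵏ, one has |P(x₁,…,x_k) − P(x₁′,…,x_k′)| ≤ c · (Σ_{q=1}^{k} |x_q − x_q′|ᵖ)^{1/p}; that is, P is a c-fair polynomial with respect to the p-norm distance on [−1,1]ᵏ. -/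

import Mathlib

open Finset

/-! Each `Pᵢ` is `(∑ⱼ j |aᵢⱼ|)`-Lipschitz on `[-1, 1]`, because `|xʲ - yʲ| ≤ j |x - y|` there.
Summing over the coordinates bounds the variation of `P` by `c / k^((p-1)/p)` times the
`ℓ¹` distance, and Hölder's inequality against the constant weight `1` gives
`‖v‖₁ ≤ k^((p-1)/p) ‖v‖ₚ`. -/

lemma abs_pow_sub_pow_le_of_abs_le_one {α : Type*} [CommRing α] [LinearOrder α]
    [IsOrderedRing α] {x y : α} (hx : |x| ≤ 1) (hy : |y| ≤ 1) (j : ℕ) :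
    |x ^ j - y ^ j| ≤ j * |x - y| :=
  calc |x ^ j - y ^ j| ≤ |x - y| * j * max |x| |y| ^ (j - 1) := abs_pow_sub_pow_le ..
    _ ≤ |x - y| * j * 1 := by gcongr; exact pow_le_one₀ (by positivity) (max_le hx hy)
    _ = j * |x - y| := by ring

lemma abs_sum_mul_pow_sub_sum_mul_pow_le {α : Type*} [CommRing α] [LinearOrder α]
    [IsOrderedRing α] (s : Finset ℕ) (a : ℕ → α) {x y : α} (hx : |x| ≤ 1) (hy : |y| ≤ 1) :
    |∑ j ∈ s, a j * x ^ j - ∑ j ∈ s, a j * y ^ j| ≤ (∑ j ∈ s, j * |a j|) * |x - y| :=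
  calc |∑ j ∈ s, a j * x ^ j - ∑ j ∈ s, a j * y ^ j|
      = |∑ j ∈ s, a j * (x ^ j - y ^ j)| := by simp only [mul_sub, sum_sub_distrib]
    _ ≤ ∑ j ∈ s, |a j| * |x ^ j - y ^ j| := by
      simpa only [abs_mul] using abs_sum_le_sum_abs (fun j => a j * (x ^ j - y ^ j)) s
    _ ≤ ∑ j ∈ s, |a j| * (j * |x - y|) := by
      gcongr with j; exact abs_pow_sub_pow_le_of_abs_le_one hx hy j
    _ = (∑ j ∈ s, j * |a j|) * |x - y| := by
      rw [sum_mul]; exact sum_congr rfl fun j _ => by ring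

lemma sum_le_card_rpow_mul_sum_rpow {ι : Type*} (s : Finset ι) {p : ℝ} (hp : 1 ≤ p)
    {f : ι → ℝ} (hf : ∀ i, 0 ≤ f i) :
    ∑ i ∈ s, f i ≤ (#s : ℝ) ^ ((p - 1) / p) * (∑ i ∈ s, f i ^ p) ^ (1 / p) := by
  have hexp : 1 - p⁻¹ = (p - 1) / p := by field_simp
  simpa [hexp] using Real.inner_le_weight_mul_Lp_of_nonneg s hp 1 f (fun _ => zero_le_one) hf

theorem sum_univariate_polys_c_fair_pnorm_general (k n : ℕ) (hk : 1 ≤ k)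
    (p : ℝ) (hp : 1 ≤ p) (c : ℝ) (hc : 0 ≤ c) (a : Fin k → ℕ → ℝ)
    (ha : ∀ i, ∑ j ∈ Finset.Icc 1 n, (j : ℝ) * |a i j| ≤
      c / (k : ℝ) ^ ((p - 1) / p)) :
    ∀ x x' : Fin k → ℝ, (∀ i, |x i| ≤ 1) → (∀ i, |x' i| ≤ 1) →
      |(∑ i, ∑ j ∈ Finset.Icc 1 n, a i j * x i ^ j) -
          (∑ i, ∑ j ∈ Finset.Icc 1 n, a i j * x' i ^ j)| ≤
        c * (∑ q, |x q - x' q| ^ p) ^ (1 / p) := by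
  intro x x' hx hx'
  have hK : 0 < (k : ℝ) ^ ((p - 1) / p) := by positivity
  have hl1 := sum_le_card_rpow_mul_sum_rpow univ hp fun q => abs_nonneg (x q - x' q)
  rw [card_univ, Fintype.card_fin] at hl1
  calc _ ≤ ∑ i, |∑ j ∈ Icc 1 n, a i j * x i ^ j - ∑ j ∈ Icc 1 n, a i j * x' i ^ j| := by
        rw [← sum_sub_distrib]; exact abs_sum_le_sum_abs _ _
    _ ≤ ∑ i, c / (k : ℝ) ^ ((p - 1) / p) * |x i - x' i| := by
        gcongr with i
        exact (abs_sum_mul_pow_sub_sum_mul_pow_le _ _ (hx i) (hx' i)).trans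
          (mul_le_mul_of_nonneg_right (ha i) (abs_nonneg _))
    _ ≤ c / (k : ℝ) ^ ((p - 1) / p) *
          ((k : ℝ) ^ ((p - 1) / p) * (∑ q, |x q - x' q| ^ p) ^ (1 / p)) := by
        rw [← mul_sum]; gcongr
    _ = c * (∑ q, |x q - x' q| ^ p) ^ (1 / p) := by field_simp

/-- A sum of `k` univariate degree-`n` polynomials, one per coordinate, whose
coefficients satisfy `∑ j in Icc 1 n, j * |a i j| ≤ c / k ^ ((p-1)/p)` for
each coordinate `i`, is `c`-fair with respect to the `p`-norm distance on
`[-1, 1]^k`. -/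
theorem sum_univariate_polys_c_fair_pnorm (k n : ℕ) (hk : 1 ≤ k) (hn : 1 ≤ n)
    (p : ℝ) (hp : 1 ≤ p) (c : ℝ) (hc : 0 ≤ c) (a : Fin k → ℕ → ℝ)
    (ha : ∀ i, ∑ j ∈ Finset.Icc 1 n, (j : ℝ) * |a i j| ≤
      c / (k : ℝ) ^ ((p - 1) / p)) :
    ∀ x x' : Fin k → ℝ, (∀ i, |x i| ≤ 1) → (∀ i, |x' i| ≤ 1) →
      |(∑ i, ∑ j ∈ Finset.Icc 1 n, a i j * x i ^ j) -
          (∑ i, ∑ j ∈ Finset.Icc 1 n, a i j * x' i ^ j)| ≤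
        c * (∑ q, |x q - x' q| ^ p) ^ (1 / p) :=
  sum_univariate_polys_c_fair_pnorm_general k n hk p hp c hc a ha
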